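/- Let Γ be a finite connected bipartite graph with ordered bipartition (B|B'), G ≤ Aut(Γ), 1 ≠ N ⊴ G, and r ≥ 3 an integer, such that Γ is r-starlike relative to N and locally (G,4)-distance transitive, and suppose N acts regularly on B. Identify B with N via n ↦ v·n for a fixed base point v (so that N acts on points by right multiplication, v corresponds to the identity of N, and G = N·G_v with G_v acting on N by conjugation). Then there exist r subgroups M_1, …, M_r of N such that, identifying each block of the adjacency design D(Γ) with its set of incident points, the set of blocks is exactly the set of right cosets {M_i·n : 1 ≤ i ≤ r, n ∈ N}; N acts on the blocks by right multiplication and G_v acts on the blocks by conjugation; in particular G_v permutes the set {M_1, …, M_r}, and the N-orbits on blocks are the r sets of right cosets of the subgroups M_i. -/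

import Mathlib

open SimpleGraph

section Prelude

variable {V : Type*}

/-- `g` is an automorphism of the graph `Γ`. -/
def IsGraphAut (Γ : SimpleGraph V) (g : Equiv.Perm V) : Prop :=
  ∀ u v : V, Γ.Adj (g u) (g v) ↔ Γ.Adj u v

/-- `(B | Bᶜ)` is an (ordered) bipartition of `Γ`: every edge joins `B` and `Bᶜ`. -/
def IsBipartition (Γ : SimpleGraph V) (B : Set V) : Prop :=
  ∀ u v : V, Γ.Adj u v → (u ∈ B ↔ v ∉ B)

/-- The orbit of `x` under a subgroup `N` of permutations of `V`. -/
def POrbit (N : Subgroup (Equiv.Perm V)) (x : V) : Set V :=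
  {y | ∃ n ∈ N, n x = y}

/-- `Γ` is locally `(G,s)`-distance transitive: the diameter is at least `s` and for
every vertex `v` and every `1 ≤ i ≤ s` the stabiliser of `v` in `G` is transitive on
the set of vertices at distance `i` from `v`. -/
def LocallyDistTrans (Γ : SimpleGraph V) (G : Subgroup (Equiv.Perm V)) (s : ℕ) : Prop :=
  s ≤ Γ.diam ∧
    ∀ (v x y : V) (i : ℕ), 1 ≤ i → i ≤ s → Γ.dist v x = i → Γ.dist v y = i →
      ∃ g ∈ G, g v = v ∧ g x = y

/-- `Γ`, bipartite with ordered bipartition `(B | Bᶜ)`, is `r`-starlike relative to `N`: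
`N` leaves `B` invariant, is transitive on `B`, and has exactly `r` orbits on `Bᶜ`. -/
def IsStarlike (Γ : SimpleGraph V) (B : Set V) (N : Subgroup (Equiv.Perm V)) (r : ℕ) : Prop :=
  (∀ n ∈ N, ∀ v : V, n v ∈ B ↔ v ∈ B) ∧
    (∀ x ∈ B, ∀ y ∈ B, ∃ n ∈ N, n x = y) ∧
    {S : Set V | ∃ x ∈ Bᶜ, S = POrbit N x}.ncard = r

/-- `G` is transitive on the set `S` of (ordered) pairs. -/
def PairTrans (G : Subgroup (Equiv.Perm V)) (S : Set (V × V)) : Prop :=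
  ∀ p ∈ S, ∀ q ∈ S, ∃ g ∈ G, g p.1 = q.1 ∧ g p.2 = q.2

/-- The adjacency design of the bipartite graph `Γ` with ordered bipartition `(B | Bᶜ)`
(points `B`, blocks `Bᶜ`, incidence = adjacency) is `G`-pairwise transitive. -/
def AdjPT (Γ : SimpleGraph V) (B : Set V) (G : Subgroup (Equiv.Perm V)) : Prop :=
  (∀ g ∈ G, ∀ v : V, g v ∈ B ↔ v ∈ B) ∧
  PairTrans G {p | p.1 ∈ B ∧ p.2 ∈ Bᶜ ∧ Γ.Adj p.1 p.2} ∧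
  PairTrans G {p | p.1 ∈ B ∧ p.2 ∈ Bᶜ ∧ ¬ Γ.Adj p.1 p.2} ∧
  PairTrans G {p | p.1 ∈ B ∧ p.2 ∈ B ∧ p.1 ≠ p.2 ∧ ∃ b ∈ Bᶜ, Γ.Adj p.1 b ∧ Γ.Adj p.2 b} ∧
  PairTrans G {p | p.1 ∈ B ∧ p.2 ∈ B ∧ p.1 ≠ p.2 ∧ ¬ ∃ b ∈ Bᶜ, Γ.Adj p.1 b ∧ Γ.Adj p.2 b} ∧
  PairTrans G {p | p.1 ∈ Bᶜ ∧ p.2 ∈ Bᶜ ∧ p.1 ≠ p.2 ∧ ∃ x ∈ B, Γ.Adj x p.1 ∧ Γ.Adj x p.2} ∧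
  PairTrans G {p | p.1 ∈ Bᶜ ∧ p.2 ∈ Bᶜ ∧ p.1 ≠ p.2 ∧ ¬ ∃ x ∈ B, Γ.Adj x p.1 ∧ Γ.Adj x p.2}

/-- The adjacency design of `Γ` (points `B`, blocks `Bᶜ`) is `N`-nicely affine:
`N` acts as automorphisms preserving the biparts, transitively on points, and there is a
constant `μ` such that distinct blocks in different `N`-orbits have exactly `μ` common
points, while distinct blocks in the same `N`-orbit have no common point. -/
def AdjNA (Γ : SimpleGraph V) (B : Set V) (N : Subgroup (Equiv.Perm V)) : Prop :=
  (∀ n ∈ N, ∀ v : V, n v ∈ B ↔ v ∈ B) ∧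
  (∀ x ∈ B, ∀ y ∈ B, ∃ n ∈ N, n x = y) ∧
  ∃ μ : ℕ, ∀ b ∈ Bᶜ, ∀ b' ∈ Bᶜ, b ≠ b' →
    ((b' ∈ POrbit N b → ¬ ∃ x, Γ.Adj x b ∧ Γ.Adj x b') ∧
     (b' ∉ POrbit N b → {x | Γ.Adj x b ∧ Γ.Adj x b'}.ncard = μ))

/-- The adjacency design of `Γ` (points `B`, blocks `Bᶜ`) is affine: the blocks can be
partitioned into parallel classes, and there is a positive constant `μ` such that blocks
in distinct parallel classes have exactly `μ` common points. -/
def AdjAffine (Γ : SimpleGraph V) (B : Set V) : Prop :=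
  ∃ 𝓒 : Set (Set V), (∀ C ∈ 𝓒, C ⊆ Bᶜ) ∧ (∀ b ∈ Bᶜ, ∃! C, C ∈ 𝓒 ∧ b ∈ C) ∧
    (∀ C ∈ 𝓒, ∀ x ∈ B, ∃! b, b ∈ C ∧ Γ.Adj x b) ∧
    ∃ μ : ℕ, 0 < μ ∧ ∀ C ∈ 𝓒, ∀ C' ∈ 𝓒, C ≠ C' → ∀ b ∈ C, ∀ b' ∈ C',
      {x | Γ.Adj x b ∧ Γ.Adj x b'}.ncard = μ

end Prelude

section DesignPrelude

variable {P L : Type*}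

/-- The design `(P, L, I)` is `G`-pairwise transitive. -/
def DesignPT (I : P → L → Prop) (G : Type*) [Group G] [MulAction G P] [MulAction G L] :
    Prop :=
  (∀ (x : P) (b : L) (x' : P) (b' : L), I x b → I x' b' →
      ∃ g : G, g • x = x' ∧ g • b = b') ∧
  (∀ (x : P) (b : L) (x' : P) (b' : L), ¬ I x b → ¬ I x' b' →
      ∃ g : G, g • x = x' ∧ g • b = b') ∧
  (∀ x y x' y' : P, x ≠ y → x' ≠ y' → (∃ b, I x b ∧ I y b) → (∃ b, I x' b ∧ I y' b) →
      ∃ g : G, g • x = x' ∧ g • y = y') ∧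
  (∀ x y x' y' : P, x ≠ y → x' ≠ y' → ¬ (∃ b, I x b ∧ I y b) → ¬ (∃ b, I x' b ∧ I y' b) →
      ∃ g : G, g • x = x' ∧ g • y = y') ∧
  (∀ b c b' c' : L, b ≠ c → b' ≠ c' → (∃ x, I x b ∧ I x c) → (∃ x, I x b' ∧ I x c') →
      ∃ g : G, g • b = b' ∧ g • c = c') ∧
  (∀ b c b' c' : L, b ≠ c → b' ≠ c' → ¬ (∃ x, I x b ∧ I x c) → ¬ (∃ x, I x b' ∧ I x c') →
      ∃ g : G, g • b = b' ∧ g • c = c')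

/-- The design `(P, L, I)` is `N`-nicely affine for the subgroup `N` of `G`. -/
def DesignNA (I : P → L → Prop) (G : Type*) [Group G] [MulAction G P] [MulAction G L]
    (N : Subgroup G) : Prop :=
  (∀ x y : P, ∃ n ∈ N, n • x = y) ∧
  ∃ μ : ℕ, ∀ b b' : L, b ≠ b' →
    (((∃ n ∈ N, n • b = b') → ¬ ∃ x, I x b ∧ I x b') ∧
     ((¬ ∃ n ∈ N, n • b = b') → {x | I x b ∧ I x b'}.ncard = μ))

/-- The incidence graph of the design `(P, L, I)`. -/
def DIncGraph (I : P → L → Prop) : SimpleGraph (P ⊕ L) :=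
  SimpleGraph.fromRel (fun a b => ∃ x s, a = Sum.inl x ∧ b = Sum.inr s ∧ I x s)

end DesignPrelude

section SetDesign

variable {V : Type*}

/-- Pairwise transitivity for a design whose points are the elements of `V`, whose
blocks are the members of `𝓑` (identified with their point-sets) and whose
incidence relation is membership; `G` is a group of permutations of `V`. -/
def SetPT (𝓑 : Set (Set V)) (G : Subgroup (Equiv.Perm V)) : Prop :=
  (∀ x : V, ∀ s ∈ 𝓑, ∀ x' : V, ∀ s' ∈ 𝓑, x ∈ s → x' ∈ s' →
      ∃ g ∈ G, g x = x' ∧ (fun z => g z) '' s = s') ∧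
  (∀ x : V, ∀ s ∈ 𝓑, ∀ x' : V, ∀ s' ∈ 𝓑, x ∉ s → x' ∉ s' →
      ∃ g ∈ G, g x = x' ∧ (fun z => g z) '' s = s') ∧
  (∀ x y x' y' : V, x ≠ y → x' ≠ y' → (∃ s ∈ 𝓑, x ∈ s ∧ y ∈ s) → (∃ s ∈ 𝓑, x' ∈ s ∧ y' ∈ s) →
      ∃ g ∈ G, g x = x' ∧ g y = y') ∧
  (∀ x y x' y' : V, x ≠ y → x' ≠ y' → ¬ (∃ s ∈ 𝓑, x ∈ s ∧ y ∈ s) → ¬ (∃ s ∈ 𝓑, x' ∈ s ∧ y' ∈ s) →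
      ∃ g ∈ G, g x = x' ∧ g y = y') ∧
  (∀ s ∈ 𝓑, ∀ t ∈ 𝓑, ∀ s' ∈ 𝓑, ∀ t' ∈ 𝓑, s ≠ t → s' ≠ t' →
      (s ∩ t).Nonempty → (s' ∩ t').Nonempty →
      ∃ g ∈ G, (fun z => g z) '' s = s' ∧ (fun z => g z) '' t = t') ∧
  (∀ s ∈ 𝓑, ∀ t ∈ 𝓑, ∀ s' ∈ 𝓑, ∀ t' ∈ 𝓑, s ≠ t → s' ≠ t' →
      s ∩ t = ∅ → s' ∩ t' = ∅ →
      ∃ g ∈ G, (fun z => g z) '' s = s' ∧ (fun z => g z) '' t = t')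

/-- Nice affineness for a design with point set `V`, blocks `𝓑` (point-sets) and
incidence given by membership, relative to a permutation group `N`. -/
def SetNA (𝓑 : Set (Set V)) (N : Subgroup (Equiv.Perm V)) : Prop :=
  (∀ x y : V, ∃ n ∈ N, n x = y) ∧
  (∀ n ∈ N, ∀ s ∈ 𝓑, (fun z => n z) '' s ∈ 𝓑) ∧
  ∃ μ : ℕ, ∀ s ∈ 𝓑, ∀ s' ∈ 𝓑, s ≠ s' →
    (((∃ n ∈ N, (fun z => n z) '' s = s') → s ∩ s' = ∅) ∧
     ((¬ ∃ n ∈ N, (fun z => n z) '' s = s') → (s ∩ s').ncard = μ))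

end SetDesign

section QuotientGraph

variable {V : Type*}

/-- The setoid on vertices whose classes are the `N`-orbits. -/
def orbitSetoid (N : Subgroup (Equiv.Perm V)) : Setoid V where
  r x y := ∃ n ∈ N, n x = y
  iseqv := by
    refine ⟨fun x => ⟨1, N.one_mem, rfl⟩, ?_, ?_⟩
    · rintro x y ⟨n, hn, rfl⟩
      exact ⟨n⁻¹, N.inv_mem hn, by simp⟩
    · rintro x y z ⟨n, hn, rfl⟩ ⟨m, hm, rfl⟩
      exact ⟨m * n, N.mul_mem hm hn, rfl⟩

/-- The normal quotient graph `Γ_N`: vertices are the `N`-orbits, two distinct orbits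
being adjacent iff some vertex of one is adjacent to some vertex of the other. -/
def quotGraph (Γ : SimpleGraph V) (N : Subgroup (Equiv.Perm V)) :
    SimpleGraph (Quotient (orbitSetoid N)) :=
  SimpleGraph.fromRel (fun a b => ∃ x y : V, Γ.Adj x y ∧
    Quotient.mk (orbitSetoid N) x = a ∧ Quotient.mk (orbitSetoid N) y = b)

end QuotientGraph

section Subdivision

variable {W : Type*}

/-- The subdivision graph `S(Σ)` of a graph `Σ`: vertices are `EΣ ⊕ VΣ`, an edge
being adjacent to its endpoints. -/
def SubdivisionGraph (Sg : SimpleGraph W) : SimpleGraph (↥Sg.edgeSet ⊕ W) :=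
  SimpleGraph.fromRel (fun a b => ∃ (e : Sg.edgeSet) (w : W),
    a = Sum.inl e ∧ b = Sum.inr w ∧ w ∈ (e : Sym2 W))

/-- The graph on `B'` in which two vertices are adjacent iff they are at distance `2`
in `Γ`. -/
def distTwoGraph (Γ : SimpleGraph W) (B' : Set W) : SimpleGraph ↥B' where
  Adj a b := Γ.dist ↑a ↑b = 2
  symm := by
    exact ⟨fun a b h => SimpleGraph.dist_comm.trans h⟩
  loopless := by
    constructor
    intro a h
    simp [SimpleGraph.dist_self] at h

/-- `f 0, f 1, …, f t` is a `t`-arc of `Sg`. -/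
def IsArcOf (Sg : SimpleGraph W) (t : ℕ) (f : ℕ → W) : Prop :=
  (∀ i : ℕ, i < t → Sg.Adj (f i) (f (i + 1))) ∧
  (∀ i : ℕ, 1 ≤ i → i + 1 ≤ t → f (i - 1) ≠ f (i + 1))

end Subdivision

/-!
Fix `v ∈ B`. Local `(G,2)`-distance transitivity makes each `N`-orbit of blocks a parallel class,
so every orbit contains exactly one block through `v`. As `N` is regular on points, the points of a
block `b` through `v` are the images of `v` under the stabiliser `N_b`, and those of `n b` under the
coset `n N_b`; `G_v` permutes the blocks through `v` and so conjugates the `N_b` among themselves.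
Since the diameter is at least `3`, distinct blocks have distinct point sets, which makes the
subgroups `N_b` distinct and identifies blocks with cosets.
-/

open scoped Pointwise

section GraphAut

variable {V : Type*} {Γ : SimpleGraph V} {g : Equiv.Perm V}

theorem IsGraphAut.adj_apply (hg : IsGraphAut Γ g) {u w : V} (h : Γ.Adj u w) :
    Γ.Adj (g u) (g w) :=
  (hg u w).mpr h

theorem IsGraphAut.neighborSet_apply (hg : IsGraphAut Γ g) (b : V) :
    Γ.neighborSet (g b) = g '' Γ.neighborSet b := by
  ext w
  refine ⟨fun h => ⟨g⁻¹ w, (hg b (g⁻¹ w)).mp (by simpa using h), by simp⟩, ?_⟩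
  rintro ⟨z, hz, rfl⟩
  exact hg.adj_apply hz

theorem IsGraphAut.apply_mem_neighborSet (hg : IsGraphAut Γ g) {v b : V} (hgv : g v = v)
    (h : b ∈ Γ.neighborSet v) : g b ∈ Γ.neighborSet v := by
  simpa [hgv] using hg.adj_apply h

end GraphAut

namespace SimpleGraph

variable {V : Type*} {Γ : SimpleGraph V}

theorem Preconnected.exists_adj_of_ne (hconn : Γ.Preconnected) {u w : V} (hne : u ≠ w) :
    ∃ x, Γ.Adj u x := by
  obtain ⟨p⟩ := hconn u w
  cases p with
  | nil => exact absurd rfl hne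
  | cons h _ => exact ⟨_, h⟩

theorem Preconnected.mem_of_adj_closed (hconn : Γ.Preconnected) {S : Set V} {u : V}
    (hu : u ∈ S) (hS : ∀ x y, x ∈ S → Γ.Adj x y → y ∈ S) (w : V) : w ∈ S := by
  obtain ⟨p⟩ := hconn u w
  induction p with
  | nil => exact hu
  | cons h _ ih => exact ih (hS _ _ hu h)

theorem dist_le_two_of_adj_of_adj {x y z : V} (hxy : Γ.Adj x y) (hyz : Γ.Adj y z) :
    Γ.dist x z ≤ 2 := by
  simpa using dist_le (.cons hxy (.cons hyz .nil))

theorem dist_eq_two_of_adj_of_adj {b c x : V} (hne : b ≠ c) (hbc : ¬ Γ.Adj b c)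
    (hxb : Γ.Adj x b) (hxc : Γ.Adj x c) : Γ.dist b c = 2 := by
  have hpos : 0 < Γ.dist b c := Reachable.pos_dist_of_ne ⟨.cons hxb.symm (.cons hxc .nil)⟩ hne
  have hne1 : Γ.dist b c ≠ 1 := fun h => hbc (dist_eq_one_iff_adj.mp h)
  have := dist_le_two_of_adj_of_adj hxb.symm hxc
  omega

theorem dist_le_two_of_twins (hconn : Γ.Preconnected) {b : V}
    (htwin : ∀ c, Γ.dist b c = 2 → Γ.neighborSet c = Γ.neighborSet b) (u w : V) :
    Γ.dist u w ≤ 2 := by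
  have hnear : ∀ u, Γ.Adj b u ∨ Γ.neighborSet u = Γ.neighborSet b := by
    refine hconn.mem_of_adj_closed (S := {u | Γ.Adj b u ∨ Γ.neighborSet u = Γ.neighborSet b})
      (Or.inr rfl) ?_
    rintro x y (hbx | hx) hxy
    · by_cases hyb : y = b
      · exact Or.inr (hyb ▸ rfl)
      by_cases hby : Γ.Adj b y
      · exact Or.inl hby
      exact Or.inr (htwin y (dist_eq_two_of_adj_of_adj (Ne.symm hyb) hby hbx.symm hxy))
    · have hy : y ∈ Γ.neighborSet x := hxy
      rw [hx] at hy
      exact Or.inl hy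
  have adj_le : ∀ {x y}, Γ.Adj x y → Γ.dist x y ≤ 2 := fun h => by
    rw [dist_eq_one_iff_adj.mpr h]; omega
  rcases hnear u with hu | hu <;> rcases hnear w with hw | hw
  · exact dist_le_two_of_adj_of_adj hu.symm hw
  · have hwu : u ∈ Γ.neighborSet w := hw ▸ hu
    exact adj_le hwu.symm
  · have huw : w ∈ Γ.neighborSet u := hu ▸ hw
    exact adj_le huw
  · by_cases huw : u = w
    · simp [huw]
    obtain ⟨x, hux⟩ := hconn.exists_adj_of_ne huw
    have hwx : x ∈ Γ.neighborSet w := hw ▸ hu ▸ hux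
    exact dist_le_two_of_adj_of_adj hux hwx.symm

end SimpleGraph

/-- In a graph of diameter at least `3`, a vertex `b'` with the same neighbours as `b ≠ b'` lies
in `Γ₂(b)`; transitivity of `G_b` on `Γ₂(b)` then gives every vertex of `Γ₂(b)` the neighbours
of `b`, which forces diameter at most `2`. -/
theorem LocallyDistTrans.neighborSet_injective {V : Type*} {Γ : SimpleGraph V}
    {G : Subgroup (Equiv.Perm V)} {s : ℕ} (hldt : LocallyDistTrans Γ G s) (hs : 3 ≤ s)
    (hconn : Γ.Connected) (hGaut : ∀ g ∈ G, IsGraphAut Γ g) :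
    Function.Injective Γ.neighborSet := by
  intro b b' h
  by_contra hne
  obtain ⟨x, hbx⟩ := hconn.preconnected.exists_adj_of_ne hne
  have hxb' : x ∈ Γ.neighborSet b' := h ▸ hbx
  have hbb' : ¬ Γ.Adj b b' := fun hadj => by
    have hloop : b' ∈ Γ.neighborSet b := hadj
    rw [h] at hloop
    exact Γ.irrefl hloop
  have hdist : Γ.dist b b' = 2 := dist_eq_two_of_adj_of_adj hne hbb' hbx.symm hxb'.symm
  have htwin : ∀ c, Γ.dist b c = 2 → Γ.neighborSet c = Γ.neighborSet b := by
    intro c hc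
    obtain ⟨g, hg, hgb, hgc⟩ := hldt.2 b b' c 2 (by omega) (by omega) hdist hc
    rw [← hgc, (hGaut g hg).neighborSet_apply, ← h, ← (hGaut g hg).neighborSet_apply, hgb]
  have : Nonempty V := ⟨b⟩
  obtain ⟨u, w, huw⟩ := Γ.exists_dist_eq_diam
  have := dist_le_two_of_twins hconn.preconnected htwin u w
  have := hldt.1
  omega

section Starlike

variable {V : Type*} {Γ : SimpleGraph V} {B : Set V} {G N : Subgroup (Equiv.Perm V)} {r : ℕ}

theorem mem_POrbit_self (x : V) : x ∈ POrbit N x :=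
  ⟨1, N.one_mem, rfl⟩

theorem POrbit_eq_of_mem {x y : V} (h : y ∈ POrbit N x) : POrbit N y = POrbit N x := by
  obtain ⟨n, hn, rfl⟩ := h
  ext z
  constructor
  · rintro ⟨m, hm, rfl⟩
    exact ⟨m * n, N.mul_mem hm hn, rfl⟩
  · rintro ⟨m, hm, rfl⟩
    exact ⟨m * n⁻¹, N.mul_mem hm (N.inv_mem hn), by simp⟩

theorem apply_mem_POrbit_apply (hnorm : ∀ g ∈ G, ∀ n ∈ N, g * n * g⁻¹ ∈ N)
    {g : Equiv.Perm V} (hg : g ∈ G) {x y : V} (h : y ∈ POrbit N x) : g y ∈ POrbit N (g x) := by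
  obtain ⟨n, hn, rfl⟩ := h
  exact ⟨g * n * g⁻¹, hnorm g hg n hn, by simp⟩

theorem IsBipartition.mem_of_adj (hbip : IsBipartition Γ B) {b x : V} (hb : b ∈ Bᶜ)
    (h : Γ.Adj x b) : x ∈ B := by
  have := hbip x b h
  tauto

theorem IsBipartition.not_adj (hbip : IsBipartition Γ B) {b c : V} (hb : b ∈ Bᶜ)
    (hc : c ∈ Bᶜ) : ¬ Γ.Adj b c :=
  fun h => hb (hbip.mem_of_adj hc h)

theorem IsBipartition.mem_compl_of_adj (hbip : IsBipartition Γ B) {x b : V} (hx : x ∈ B)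
    (h : Γ.Adj x b) : b ∈ Bᶜ :=
  (hbip x b h).mp hx

theorem IsStarlike.apply_mem_compl (hstar : IsStarlike Γ B N r) {n : Equiv.Perm V} (hn : n ∈ N)
    {b : V} (hb : b ∈ Bᶜ) : n b ∈ Bᶜ :=
  fun h => hb ((hstar.1 n hn b).mp h)

theorem IsStarlike.exists_not_mem_POrbit (hstar : IsStarlike Γ B N r) (hr : 2 ≤ r) (b : V) :
    ∃ c ∈ Bᶜ, c ∉ POrbit N b := by
  by_contra! hall
  have hsub : {S : Set V | ∃ x ∈ Bᶜ, S = POrbit N x} ⊆ {POrbit N b} := by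
    rintro S ⟨c, hc, rfl⟩
    exact POrbit_eq_of_mem (hall c hc)
  have := Set.ncard_le_ncard hsub
  rw [hstar.2.2, Set.ncard_singleton] at this
  omega

theorem IsStarlike.exists_adj_apply (hstar : IsStarlike Γ B N r) (hconn : Γ.Connected)
    (hbip : IsBipartition Γ B) (hGaut : ∀ g ∈ G, IsGraphAut Γ g) (hNG : N ≤ G) {c x : V}
    (hc : c ∈ Bᶜ) (hx : x ∈ B) : ∃ n ∈ N, Γ.Adj x (n c) := by
  obtain ⟨y, hcy⟩ := hconn.preconnected.exists_adj_of_ne (fun h : c = x => hc (h ▸ hx))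
  obtain ⟨n, hn, hny⟩ := hstar.2.1 y (hbip.mem_of_adj hc hcy.symm) x hx
  exact ⟨n, hn, hny ▸ (hGaut n (hNG hn)).adj_apply hcy.symm⟩

def ParallelOrbits (Γ : SimpleGraph V) (B : Set V) (N : Subgroup (Equiv.Perm V)) : Prop :=
  ∀ b ∈ Bᶜ, ∀ σ ∈ N, ∀ x, Γ.Adj x b → Γ.Adj x (σ b) → σ b = b

/-- If `b ≠ σ b` met in `x`, then `G_b`, transitive on `Γ₂(b)`, would carry `σ b` onto a block
through `x` from another `N`-orbit, although `G` permutes the `N`-orbits. -/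
theorem IsStarlike.parallelOrbits (hstar : IsStarlike Γ B N r) (hr : 2 ≤ r)
    (hconn : Γ.Connected) (hbip : IsBipartition Γ B) (hGaut : ∀ g ∈ G, IsGraphAut Γ g)
    (hNG : N ≤ G) (hnorm : ∀ g ∈ G, ∀ n ∈ N, g * n * g⁻¹ ∈ N) {s : ℕ} (hs : 2 ≤ s)
    (hldt : LocallyDistTrans Γ G s) : ParallelOrbits Γ B N := by
  intro b hb σ hσ x hxb hxσb
  by_contra hne
  obtain ⟨c, hc, hcb⟩ := hstar.exists_not_mem_POrbit hr b
  obtain ⟨n, hn, hxc⟩ := hstar.exists_adj_apply hconn hbip hGaut hNG hc (hbip.mem_of_adj hb hxb)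
  have hnc : n c ≠ b := fun h => hcb ⟨n⁻¹, N.inv_mem hn, by simp [← h]⟩
  obtain ⟨g, hg, hgb, hgσb⟩ := hldt.2 b (σ b) (n c) 2 one_le_two hs
    (dist_eq_two_of_adj_of_adj (Ne.symm hne) (hbip.not_adj hb (hstar.apply_mem_compl hσ hb))
      hxb hxσb)
    (dist_eq_two_of_adj_of_adj (Ne.symm hnc) (hbip.not_adj hb (hstar.apply_mem_compl hn hc))
      hxb hxc)
  obtain ⟨τ, hτ, hτb⟩ : n c ∈ POrbit N b := by
    have := apply_mem_POrbit_apply hnorm hg (⟨σ, hσ, rfl⟩ : σ b ∈ POrbit N b)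
    rwa [hgb, hgσb] at this
  exact hcb ⟨n⁻¹ * τ, N.mul_mem (N.inv_mem hn) hτ, by simp [hτb]⟩

/-- `b ↦ POrbit N b` is a bijection from the blocks through `v` onto the `N`-orbits of blocks. -/
theorem IsStarlike.ncard_neighborSet (hstar : IsStarlike Γ B N r) (hconn : Γ.Connected)
    (hbip : IsBipartition Γ B) (hGaut : ∀ g ∈ G, IsGraphAut Γ g) (hNG : N ≤ G)
    (hpar : ParallelOrbits Γ B N) {v : V} (hv : v ∈ B) : (Γ.neighborSet v).ncard = r := by
  rw [← hstar.2.2]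
  refine Set.ncard_congr (fun b _ => POrbit N b)
    (fun b hb => ⟨b, hbip.mem_compl_of_adj hv hb, rfl⟩) ?_ ?_
  · intro b b' hb hb' h
    obtain ⟨σ, hσ, rfl⟩ : b' ∈ POrbit N b := h ▸ mem_POrbit_self b'
    exact (hpar b (hbip.mem_compl_of_adj hv hb) σ hσ v hb hb').symm
  · rintro S ⟨c, hc, rfl⟩
    obtain ⟨n, hn, hvc⟩ := hstar.exists_adj_apply hconn hbip hGaut hNG hc hv
    exact ⟨n c, hvc, POrbit_eq_of_mem ⟨n, hn, rfl⟩⟩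

end Starlike

theorem Subgroup.eq_of_smul_coe_eq_smul_coe {G : Type*} [Group G] {H K : Subgroup G} {a b : G}
    (h : a • (H : Set G) = b • (K : Set G)) : H = K := by
  have ha : a ∈ b • (K : Set G) := h ▸ by simpa using Set.smul_mem_smul_set (a := a) H.one_mem
  obtain ⟨k, hk, rfl⟩ := Set.mem_smul_set.mp ha
  apply SetLike.coe_injective
  rw [← inv_smul_smul (b • k) (H : Set G), h, smul_smul, smul_eq_mul, mul_inv_rev,
    inv_mul_cancel_right, smul_coe_set (K.inv_mem hk)]

section Cosets

variable {V : Type*} {Γ : SimpleGraph V} {B : Set V} {G N : Subgroup (Equiv.Perm V)} {r : ℕ}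
  {v : V}

def stabilizerIn (N : Subgroup (Equiv.Perm V)) (b : V) : Subgroup (Equiv.Perm V) :=
  N ⊓ MulAction.stabilizer (Equiv.Perm V) b

theorem mem_stabilizerIn {b : V} {m : Equiv.Perm V} : m ∈ stabilizerIn N b ↔ m ∈ N ∧ m b = b :=
  Iff.rfl

theorem stabilizerIn_le (b : V) : stabilizerIn N b ≤ N :=
  inf_le_left

theorem image_conj_stabilizerIn (hnorm : ∀ g ∈ G, ∀ n ∈ N, g * n * g⁻¹ ∈ N)
    {g : Equiv.Perm V} (hg : g ∈ G) (b : V) :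
    (fun m => g * m * g⁻¹) '' (stabilizerIn N b : Set (Equiv.Perm V)) = stabilizerIn N (g b) := by
  ext x
  constructor
  · rintro ⟨m, hm, rfl⟩
    obtain ⟨hm, hmb⟩ := mem_stabilizerIn.mp hm
    exact mem_stabilizerIn.mpr ⟨hnorm g hg m hm, by simp [hmb]⟩
  · intro hx
    obtain ⟨hx, hxb⟩ := mem_stabilizerIn.mp hx
    refine ⟨g⁻¹ * x * g, mem_stabilizerIn.mpr ⟨by simpa using hnorm g⁻¹ (G.inv_mem hg) x hx, ?_⟩,
      by group⟩
    simp [hxb]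

theorem mem_stabilizerIn_iff_adj (hpar : ParallelOrbits Γ B N)
    (hGaut : ∀ g ∈ G, IsGraphAut Γ g) (hNG : N ≤ G) {b : V} (hb : b ∈ Bᶜ) (hvb : Γ.Adj v b)
    {m : Equiv.Perm V} : m ∈ stabilizerIn N b ↔ m ∈ N ∧ Γ.Adj (m v) b := by
  constructor
  · intro hm
    obtain ⟨hm, hmb⟩ := mem_stabilizerIn.mp hm
    have hadj := (hGaut m (hNG hm)).adj_apply hvb
    rw [hmb] at hadj
    exact ⟨hm, hadj⟩
  · rintro ⟨hm, hmvb⟩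
    exact mem_stabilizerIn.mpr ⟨hm, hpar b hb m hm (m v) hmvb ((hGaut m (hNG hm)).adj_apply hvb)⟩

theorem neighborSet_eq_image_stabilizerIn (hstar : IsStarlike Γ B N r)
    (hbip : IsBipartition Γ B) (hpar : ParallelOrbits Γ B N) (hGaut : ∀ g ∈ G, IsGraphAut Γ g)
    (hNG : N ≤ G) (hv : v ∈ B) {b : V} (hvb : Γ.Adj v b) :
    Γ.neighborSet b = (fun m => m v) '' (stabilizerIn N b : Set (Equiv.Perm V)) := by
  have hb := hbip.mem_compl_of_adj hv hvb
  ext x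
  constructor
  · intro hbx
    obtain ⟨n, hn, rfl⟩ := hstar.2.1 v hv x (hbip.mem_of_adj hb hbx.symm)
    exact ⟨n, (mem_stabilizerIn_iff_adj hpar hGaut hNG hb hvb).mpr ⟨hn, hbx.symm⟩, rfl⟩
  · rintro ⟨m, hm, rfl⟩
    exact ((mem_stabilizerIn_iff_adj hpar hGaut hNG hb hvb).mp hm).2.symm

theorem stabilizerIn_injOn_neighborSet (hstar : IsStarlike Γ B N r)
    (hbip : IsBipartition Γ B) (hpar : ParallelOrbits Γ B N) (hGaut : ∀ g ∈ G, IsGraphAut Γ g)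
    (hNG : N ≤ G) (hnbr : Function.Injective Γ.neighborSet) (hv : v ∈ B) :
    Set.InjOn (stabilizerIn N) (Γ.neighborSet v) := fun b hb b' hb' h => hnbr <| by
  rw [neighborSet_eq_image_stabilizerIn hstar hbip hpar hGaut hNG hv hb,
    neighborSet_eq_image_stabilizerIn hstar hbip hpar hGaut hNG hv hb', h]

theorem neighborSet_apply_eq_image_mul {σ n : Equiv.Perm V} (hσ : IsGraphAut Γ σ) {b : V}
    {H : Set (Equiv.Perm V)} (h : Γ.neighborSet b = (fun m => (n * m) v) '' H) :
    Γ.neighborSet (σ b) = (fun m => (σ * n * m) v) '' H := by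
  rw [hσ.neighborSet_apply, h, Set.image_image]
  rfl

theorem neighborSet_apply_eq_coset (hstar : IsStarlike Γ B N r) (hbip : IsBipartition Γ B)
    (hpar : ParallelOrbits Γ B N) (hGaut : ∀ g ∈ G, IsGraphAut Γ g) (hNG : N ≤ G) (hv : v ∈ B)
    {b : V} (hvb : Γ.Adj v b) {n : Equiv.Perm V} (hn : n ∈ N) :
    Γ.neighborSet (n b) = (fun m => (n * m) v) '' (stabilizerIn N b : Set (Equiv.Perm V)) := by
  rw [(hGaut n (hNG hn)).neighborSet_apply,
    neighborSet_eq_image_stabilizerIn hstar hbip hpar hGaut hNG hv hvb, Set.image_image]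
  rfl

theorem neighborSet_apply_eq_conj {g n : Equiv.Perm V} (hg : IsGraphAut Γ g) (hgv : g v = v)
    {b : V} {H : Set (Equiv.Perm V)} (h : Γ.neighborSet b = (fun m => (n * m) v) '' H) :
    Γ.neighborSet (g b) = (fun m => (g * n * g⁻¹ * m) v) '' ((fun m => g * m * g⁻¹) '' H) := by
  have hginv : g.symm v = v := by rw [Equiv.symm_apply_eq, hgv]
  rw [hg.neighborSet_apply, h, Set.image_image, Set.image_image]
  simp [hginv]

theorem injOn_apply_of_regular (hreg : ∀ x ∈ B, ∀ y ∈ B, ∃! n : Equiv.Perm V, n ∈ N ∧ n x = y)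
    (hNB : ∀ n ∈ N, ∀ v : V, n v ∈ B ↔ v ∈ B) (hv : v ∈ B) :
    Set.InjOn (fun m : Equiv.Perm V => m v) N := fun a ha _ ha' h =>
  (hreg v hv (a v) ((hNB a ha v).mpr hv)).unique ⟨ha, rfl⟩ ⟨ha', h.symm⟩

theorem image_mul_apply_eq (a : Equiv.Perm V) (H : Set (Equiv.Perm V)) :
    (fun m => (a * m) v) '' H = (fun m => m v) '' (a • H) := by
  rw [← Set.image_smul, Set.image_image]
  rfl

theorem exists_apply_eq_iff_of_neighborSet_eq_coset (hGaut : ∀ g ∈ G, IsGraphAut Γ g)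
    (hNG : N ≤ G) (hnbr : Function.Injective Γ.neighborSet)
    (heval : Set.InjOn (fun m : Equiv.Perm V => m v) N) {H K : Subgroup (Equiv.Perm V)}
    (hH : H ≤ N) (hK : K ≤ N) {b b' : V} {n n' : Equiv.Perm V} (hn : n ∈ N) (hn' : n' ∈ N)
    (hb : Γ.neighborSet b = (fun m => (n * m) v) '' (H : Set (Equiv.Perm V)))
    (hb' : Γ.neighborSet b' = (fun m => (n' * m) v) '' (K : Set (Equiv.Perm V))) :
    (∃ σ ∈ N, σ b = b') ↔ H = K := by
  have hsub : ∀ {a : Equiv.Perm V} {L : Subgroup (Equiv.Perm V)}, a ∈ N → L ≤ N →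
      a • (L : Set (Equiv.Perm V)) ⊆ N := fun ha hL _ hx => by
    obtain ⟨l, hl, rfl⟩ := Set.mem_smul_set.mp hx
    exact N.mul_mem ha (hL hl)
  constructor
  · rintro ⟨σ, hσ, rfl⟩
    have hσb := neighborSet_apply_eq_image_mul (hGaut σ (hNG hσ)) hb
    rw [hb', image_mul_apply_eq, image_mul_apply_eq,
      heval.image_eq_image_iff (hsub hn' hK) (hsub (N.mul_mem hσ hn) hH)] at hσb
    exact (Subgroup.eq_of_smul_coe_eq_smul_coe hσb).symm
  · rintro rfl
    refine ⟨n' * n⁻¹, N.mul_mem hn' (N.inv_mem hn), hnbr ?_⟩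
    rw [neighborSet_apply_eq_image_mul (hGaut _ (hNG (N.mul_mem hn' (N.inv_mem hn)))) hb, hb',
      inv_mul_cancel_right]

end Cosets

theorem statement17_general {V : Type*} (Γ : SimpleGraph V) (B : Set V)
    (hconn : Γ.Connected) (hbip : IsBipartition Γ B)
    (G N : Subgroup (Equiv.Perm V)) (hGaut : ∀ g ∈ G, IsGraphAut Γ g)
    (hNG : N ≤ G) (hnorm : ∀ g ∈ G, ∀ n ∈ N, g * n * g⁻¹ ∈ N)
    (r : ℕ) (hr : 3 ≤ r)
    (hstar : IsStarlike Γ B N r) (hldt : LocallyDistTrans Γ G 4)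
    (hreg : ∀ x ∈ B, ∀ y ∈ B, ∃! n : Equiv.Perm V, n ∈ N ∧ n x = y)
    (v : V) (hv : v ∈ B) :
    ∃ M : Fin r → Subgroup (Equiv.Perm V), Function.Injective M ∧ (∀ i, M i ≤ N) ∧
      -- every block is a coset of some Mᵢ …
      (∀ b ∈ Bᶜ, ∃ (i : Fin r), ∃ n ∈ N,
        Γ.neighborSet b =
          (fun m : Equiv.Perm V => (n * m) v) '' (M i : Set (Equiv.Perm V))) ∧
      -- … and every coset of every Mᵢ is a block
      (∀ i : Fin r, ∀ n ∈ N, ∃ b ∈ Bᶜ,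
        Γ.neighborSet b =
          (fun m : Equiv.Perm V => (n * m) v) '' (M i : Set (Equiv.Perm V))) ∧
      -- N acts on the blocks by multiplication
      (∀ σ ∈ N, ∀ b ∈ Bᶜ, ∀ i : Fin r, ∀ n ∈ N,
        Γ.neighborSet b =
            (fun m : Equiv.Perm V => (n * m) v) '' (M i : Set (Equiv.Perm V)) →
          Γ.neighborSet (σ b) =
            (fun m : Equiv.Perm V => ((σ * n) * m) v) '' (M i : Set (Equiv.Perm V))) ∧
      -- G_v permutes {M₁, …, M_r} and acts on the blocks by conjugation
      (∀ g ∈ G, g v = v → ∀ i : Fin r, ∃ j : Fin r,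
        (fun m : Equiv.Perm V => g * m * g⁻¹) '' (M i : Set (Equiv.Perm V))
          = (M j : Set (Equiv.Perm V))) ∧
      (∀ g ∈ G, g v = v → ∀ b ∈ Bᶜ, ∀ i : Fin r, ∀ n ∈ N,
        Γ.neighborSet b =
            (fun m : Equiv.Perm V => (n * m) v) '' (M i : Set (Equiv.Perm V)) →
          ∃ j : Fin r,
            (fun m : Equiv.Perm V => g * m * g⁻¹) '' (M i : Set (Equiv.Perm V))
              = (M j : Set (Equiv.Perm V)) ∧
            Γ.neighborSet (g b) =
              (fun m : Equiv.Perm V => ((g * n * g⁻¹) * m) v) ''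
                (M j : Set (Equiv.Perm V))) ∧
      -- the N-orbits on the blocks are the r families of cosets of the Mᵢ
      (∀ b ∈ Bᶜ, ∀ b' ∈ Bᶜ, ∀ i j : Fin r, ∀ n ∈ N, ∀ n' ∈ N,
        Γ.neighborSet b =
            (fun m : Equiv.Perm V => (n * m) v) '' (M i : Set (Equiv.Perm V)) →
        Γ.neighborSet b' =
            (fun m : Equiv.Perm V => (n' * m) v) '' (M j : Set (Equiv.Perm V)) →
          ((∃ σ ∈ N, σ b = b') ↔ i = j)) := by
  have hpar := hstar.parallelOrbits (by omega) hconn hbip hGaut hNG hnorm (by norm_num) hldt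
  have hnbr := hldt.neighborSet_injective (by norm_num) hconn hGaut
  have hcard : Nat.card (Γ.neighborSet v) = r := by
    rw [Nat.card_coe_set_eq, hstar.ncard_neighborSet hconn hbip hGaut hNG hpar hv]
  have : Finite (Γ.neighborSet v) := Nat.finite_of_card_ne_zero (by omega)
  set e := (Finite.equivFinOfCardEq hcard).symm
  set M : Fin r → Subgroup (Equiv.Perm V) := fun i => stabilizerIn N (e i)
  have hcoset (i : Fin r) {n : Equiv.Perm V} (hn : n ∈ N) :=
    neighborSet_apply_eq_coset hstar hbip hpar hGaut hNG hv (e i).2 hn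
  have hperm : ∀ g ∈ G, g v = v → ∀ i, ∃ j,
      (fun m => g * m * g⁻¹) '' (M i : Set (Equiv.Perm V)) = M j := fun g hg hgv i =>
    ⟨e.symm ⟨g (e i), (hGaut g hg).apply_mem_neighborSet hgv (e i).2⟩,
      by simpa [M] using image_conj_stabilizerIn hnorm hg (e i : V)⟩
  have hMinj : Function.Injective M := fun i j hij => e.injective <| Subtype.ext <|
    stabilizerIn_injOn_neighborSet hstar hbip hpar hGaut hNG hnbr hv (e i).2 (e j).2 hij
  refine ⟨M, hMinj, fun i => stabilizerIn_le _, fun c hc => ?_, fun i n hn => ?_,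
    fun σ hσ _ _ _ _ _ hb => neighborSet_apply_eq_image_mul (hGaut σ (hNG hσ)) hb, hperm,
    fun g hg hgv _ _ i _ _ hb => ?_, fun _ _ _ _ i j _ hn _ hn' hb hb' => ?_⟩
  · obtain ⟨n, hn, hvc⟩ := hstar.exists_adj_apply hconn hbip hGaut hNG hc hv
    refine ⟨e.symm ⟨n c, hvc⟩, n⁻¹, N.inv_mem hn, ?_⟩
    simpa [M] using hcoset (e.symm ⟨n c, hvc⟩) (N.inv_mem hn)
  · exact ⟨n (e i), hstar.apply_mem_compl hn (hbip.mem_compl_of_adj hv (e i).2), hcoset i hn⟩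
  · obtain ⟨j, hj⟩ := hperm g hg hgv i
    exact ⟨j, hj, hj ▸ neighborSet_apply_eq_conj (hGaut g hg) hgv hb⟩
  · exact (exists_apply_eq_iff_of_neighborSet_eq_coset hGaut hNG hnbr
      (injOn_apply_of_regular hreg hstar.1 hv) (stabilizerIn_le _) (stabilizerIn_le _) hn hn' hb
      hb').trans hMinj.eq_iff

/-- **Lemma `lem:subgpsN`**.  Suppose `Γ` is `r`-starlike (`r ≥ 3`) relative to
`1 ≠ N ⊴ G ≤ Aut Γ`, locally `(G,4)`-distance transitive, and `N` is regular on `B`.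
Identify `B` with `N` via `n ↦ n v` for a base point `v ∈ B`.  Then there are `r`
subgroups `M₁, …, M_r` of `N` such that the blocks of `D(Γ)`, identified with their
point-sets, are exactly the cosets `{(n·m) v : m ∈ Mᵢ}`; `N` acts on the blocks by
multiplication and the stabiliser `G_v` acts on them by conjugation; in particular
`G_v` permutes `{M₁, …, M_r}`, and the `N`-orbits on blocks are the `r` families of
cosets of the `Mᵢ`.  (With Lean's left-action convention for permutations, the
paper's right cosets `Mᵢ·n` and right multiplication become left cosets `n·Mᵢ` and
left multiplication.) -/
theorem statement17 {V : Type*} [Fintype V] (Γ : SimpleGraph V) (B : Set V)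
    (hconn : Γ.Connected) (hbip : IsBipartition Γ B)
    (G N : Subgroup (Equiv.Perm V)) (hGaut : ∀ g ∈ G, IsGraphAut Γ g)
    (hNG : N ≤ G) (hN1 : N ≠ ⊥) (hnorm : ∀ g ∈ G, ∀ n ∈ N, g * n * g⁻¹ ∈ N)
    (r : ℕ) (hr : 3 ≤ r)
    (hstar : IsStarlike Γ B N r) (hldt : LocallyDistTrans Γ G 4)
    (hreg : ∀ x ∈ B, ∀ y ∈ B, ∃! n : Equiv.Perm V, n ∈ N ∧ n x = y)
    (v : V) (hv : v ∈ B) :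
    ∃ M : Fin r → Subgroup (Equiv.Perm V), Function.Injective M ∧ (∀ i, M i ≤ N) ∧
      -- every block is a coset of some Mᵢ …
      (∀ b ∈ Bᶜ, ∃ (i : Fin r), ∃ n ∈ N,
        Γ.neighborSet b =
          (fun m : Equiv.Perm V => (n * m) v) '' (M i : Set (Equiv.Perm V))) ∧
      -- … and every coset of every Mᵢ is a block
      (∀ i : Fin r, ∀ n ∈ N, ∃ b ∈ Bᶜ,
        Γ.neighborSet b =
          (fun m : Equiv.Perm V => (n * m) v) '' (M i : Set (Equiv.Perm V))) ∧
      -- N acts on the blocks by multiplication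
      (∀ σ ∈ N, ∀ b ∈ Bᶜ, ∀ i : Fin r, ∀ n ∈ N,
        Γ.neighborSet b =
            (fun m : Equiv.Perm V => (n * m) v) '' (M i : Set (Equiv.Perm V)) →
          Γ.neighborSet (σ b) =
            (fun m : Equiv.Perm V => ((σ * n) * m) v) '' (M i : Set (Equiv.Perm V))) ∧
      -- G_v permutes {M₁, …, M_r} and acts on the blocks by conjugation
      (∀ g ∈ G, g v = v → ∀ i : Fin r, ∃ j : Fin r,
        (fun m : Equiv.Perm V => g * m * g⁻¹) '' (M i : Set (Equiv.Perm V))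
          = (M j : Set (Equiv.Perm V))) ∧
      (∀ g ∈ G, g v = v → ∀ b ∈ Bᶜ, ∀ i : Fin r, ∀ n ∈ N,
        Γ.neighborSet b =
            (fun m : Equiv.Perm V => (n * m) v) '' (M i : Set (Equiv.Perm V)) →
          ∃ j : Fin r,
            (fun m : Equiv.Perm V => g * m * g⁻¹) '' (M i : Set (Equiv.Perm V))
              = (M j : Set (Equiv.Perm V)) ∧
            Γ.neighborSet (g b) =
              (fun m : Equiv.Perm V => ((g * n * g⁻¹) * m) v) ''
                (M j : Set (Equiv.Perm V))) ∧
      -- the N-orbits on the blocks are the r families of cosets of the Mᵢ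
      (∀ b ∈ Bᶜ, ∀ b' ∈ Bᶜ, ∀ i j : Fin r, ∀ n ∈ N, ∀ n' ∈ N,
        Γ.neighborSet b =
            (fun m : Equiv.Perm V => (n * m) v) '' (M i : Set (Equiv.Perm V)) →
        Γ.neighborSet b' =
            (fun m : Equiv.Perm V => (n' * m) v) '' (M j : Set (Equiv.Perm V)) →
          ((∃ σ ∈ N, σ b = b') ↔ i = j)) :=
  statement17_general Γ B hconn hbip G N hGaut hNG hnorm r hr hstar hldt hreg v hv
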